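/- For a, b > 0 and σ_{1,2} = a ± √(a² - b) with σ₁ ≠ σ₂ and σᵢ ∉ Λ(E,A), the matrix V = [ ½(A-σ₁E)⁻¹b + ½(A-σ₂E)⁻¹b , (A-σ₂E)⁻¹E(A-σ₁E)⁻¹b ] is real and satisfies the Sylvester equation A V - E V S - b R = 0 with S = [[a, 1],[a²-b, a]] and R = [1, 0]. -/
import Mathlib


open Matrix

private lemma inv_map_conj {n : ℕ} (M : Matrix (Fin n) (Fin n) ℂ) (hM : IsUnit M.det) :
    (M.map (starRingEnd ℂ))⁻¹ = M⁻¹.map (starRingEnd ℂ) := by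
  apply Matrix.inv_eq_right_inv
  rw [← Matrix.map_mul, Matrix.mul_nonsing_inv _ hM]
  exact Matrix.map_one _ (map_zero _) (map_one _)

private lemma conj_mulVec {n : ℕ} (M : Matrix (Fin n) (Fin n) ℂ) (v : Fin n → ℂ) (i : Fin n) :
    (starRingEnd ℂ) ((M *ᵥ v) i)
      = ((M.map (starRingEnd ℂ)) *ᵥ (fun k => (starRingEnd ℂ) (v k))) i := by
  simp [Matrix.mulVec, dotProduct, map_sum]

/-- For `a, b > 0` and distinct `σ₁, σ₂` with `σ₁ + σ₂ = 2a`, `σ₁σ₂ = b`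
(i.e. `σ_{1,2} = a ± √(a²-b)`), the matrix
`V = [½(A-σ₁E)⁻¹b + ½(A-σ₂E)⁻¹b , (A-σ₂E)⁻¹E(A-σ₁E)⁻¹b]` is real and satisfies the
Sylvester equation `A V - E V S - b R = 0` with `S = [[a,1],[a²-b,a]]`, `R = [1,0]`.
(The real system matrices are encoded as complex matrices with vanishing imaginary parts.) -/
theorem stmt18 {n : ℕ}
    (E A : Matrix (Fin n) (Fin n) ℂ) (bc : Fin n → ℂ)
    (hEreal : ∀ i j, (E i j).im = 0) (hAreal : ∀ i j, (A i j).im = 0)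
    (hbreal : ∀ i, (bc i).im = 0)
    (a b : ℝ) (ha : 0 < a) (hb : 0 < b)
    (σ₁ σ₂ : ℂ) (hσne : σ₁ ≠ σ₂) (hsum : σ₁ + σ₂ = 2 * a) (hprod : σ₁ * σ₂ = b)
    (h1 : IsUnit (A - σ₁ • E).det) (h2 : IsUnit (A - σ₂ • E).det)
    (V : Matrix (Fin n) (Fin 2) ℂ)
    (hV0 : ∀ i, V i 0 = (1 / 2 : ℂ) * ((A - σ₁ • E)⁻¹ *ᵥ bc) i
                      + (1 / 2 : ℂ) * ((A - σ₂ • E)⁻¹ *ᵥ bc) i)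
    (hV1 : ∀ i, V i 1 = ((A - σ₂ • E)⁻¹ *ᵥ (E *ᵥ ((A - σ₁ • E)⁻¹ *ᵥ bc))) i) :
    (∀ i j, (V i j).im = 0) ∧
    A * V - E * V * !![(a : ℂ), 1; (a : ℂ) ^ 2 - (b : ℂ), (a : ℂ)]
      - (Matrix.of fun i (_ : Fin 1) => bc i) * !![(1 : ℂ), 0] = 0 := by
  set M₁ := A - σ₁ • E with hM₁def
  set M₂ := A - σ₂ • E with hM₂def
  set x₁ : Fin n → ℂ := M₁⁻¹ *ᵥ bc with hx₁
  set x₂ : Fin n → ℂ := M₂⁻¹ *ᵥ bc with hx₂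
  set v₁ : Fin n → ℂ := M₂⁻¹ *ᵥ (E *ᵥ x₁) with hv₁
  have hMx₁ : M₁ *ᵥ x₁ = bc := by
    rw [hx₁, Matrix.mulVec_mulVec, Matrix.mul_nonsing_inv _ h1, Matrix.one_mulVec]
  have hMx₂ : M₂ *ᵥ x₂ = bc := by
    rw [hx₂, Matrix.mulVec_mulVec, Matrix.mul_nonsing_inv _ h2, Matrix.one_mulVec]
  have hMv₁ : M₂ *ᵥ v₁ = E *ᵥ x₁ := by
    rw [hv₁, Matrix.mulVec_mulVec, Matrix.mul_nonsing_inv _ h2, Matrix.one_mulVec]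
  -- f1, f2, f3
  have f1 : A *ᵥ x₁ = σ₁ • (E *ᵥ x₁) + bc := by
    rw [← hMx₁, hM₁def, Matrix.sub_mulVec, Matrix.smul_mulVec]; abel
  have f2 : A *ᵥ x₂ = σ₂ • (E *ᵥ x₂) + bc := by
    rw [← hMx₂, hM₂def, Matrix.sub_mulVec, Matrix.smul_mulVec]; abel
  have f3 : A *ᵥ v₁ = σ₂ • (E *ᵥ v₁) + E *ᵥ x₁ := by
    rw [← hMv₁, hM₂def, Matrix.sub_mulVec, Matrix.smul_mulVec]; abel
  -- f4 : x₁ = x₂ + (σ₁ - σ₂) • v₁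
  have hM₂x₁ : M₂ *ᵥ x₁ = bc + (σ₁ - σ₂) • (E *ᵥ x₁) := by
    have h : M₂ = M₁ + (σ₁ - σ₂) • E := by
      rw [hM₁def, hM₂def, sub_smul]; abel
    rw [h, Matrix.add_mulVec, Matrix.smul_mulVec, hMx₁]
  have f4 : x₁ = x₂ + (σ₁ - σ₂) • v₁ := by
    have : x₁ = M₂⁻¹ *ᵥ (M₂ *ᵥ x₁) := by
      rw [Matrix.mulVec_mulVec, Matrix.nonsing_inv_mul _ h2, Matrix.one_mulVec]
    rw [this, hM₂x₁, Matrix.mulVec_add, Matrix.mulVec_smul, ← hx₂, ← hv₁]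
  have f4' : E *ᵥ x₁ = E *ᵥ x₂ + (σ₁ - σ₂) • (E *ᵥ v₁) := by
    conv_lhs => rw [f4]
    rw [Matrix.mulVec_add, Matrix.mulVec_smul]
  -- pointwise value of v₁
  have hσsub : σ₁ - σ₂ ≠ 0 := sub_ne_zero.mpr hσne
  have hv₁pt : ∀ i, v₁ i = (σ₁ - σ₂)⁻¹ * (x₁ i - x₂ i) := by
    intro i
    have := congrFun f4 i
    simp only [Pi.add_apply, Pi.smul_apply, smul_eq_mul] at this
    rw [this, add_sub_cancel_left, inv_mul_cancel_left₀ hσsub]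
  -- conjugation facts
  have hconjM : ∀ σ : ℂ, (A - σ • E).map (starRingEnd ℂ) = A - (starRingEnd ℂ) σ • E := by
    intro σ
    ext i j
    simp only [Matrix.map_apply, Matrix.sub_apply, Matrix.smul_apply, map_sub,
      _root_.map_mul, smul_eq_mul]
    rw [Complex.conj_eq_iff_im.mpr (hAreal i j), Complex.conj_eq_iff_im.mpr (hEreal i j)]
  have hconjx : ∀ (σ : ℂ) (h : IsUnit (A - σ • E).det) (i : Fin n),
      (starRingEnd ℂ) (((A - σ • E)⁻¹ *ᵥ bc) i)
        = (((A - (starRingEnd ℂ) σ • E)⁻¹ *ᵥ bc) i) := by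
    intro σ h i
    rw [conj_mulVec]
    congr 1
    · rw [← inv_map_conj _ h, hconjM]
    · funext k; exact Complex.conj_eq_iff_im.mpr (hbreal k)
  -- dichotomy on σ's
  have hdich : ((starRingEnd ℂ) σ₁ = σ₁ ∧ (starRingEnd ℂ) σ₂ = σ₂) ∨
      ((starRingEnd ℂ) σ₁ = σ₂ ∧ (starRingEnd ℂ) σ₂ = σ₁) := by
    by_cases him : σ₁.im = 0
    · left
      constructor
      · exact Complex.conj_eq_iff_im.mpr him
      · apply Complex.conj_eq_iff_im.mpr
        have := congrArg Complex.im hsum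
        simp [him] at this
        simpa [Complex.add_im, him] using this
    · right
      have hsim : σ₂.im = -σ₁.im := by
        have := congrArg Complex.im hsum
        simp [Complex.add_im] at this
        linarith
      have hsre : σ₂.re = 2 * a - σ₁.re := by
        have := congrArg Complex.re hsum
        simp [Complex.add_re] at this
        push_cast at this
        linarith
      have hre : σ₁.re = a := by
        have h2im : σ₁.re * σ₂.im + σ₁.im * σ₂.re = 0 := by
          have := congrArg Complex.im hprod
          simpa [Complex.mul_im] using this
        rw [hsim, hsre] at h2im
        have hfac : σ₁.im * (2 * a - 2 * σ₁.re) = 0 := by linear_combination h2im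
        rcases mul_eq_zero.mp hfac with h | h
        · exact absurd h him
        · linarith
      have hσ₂ : σ₂ = 2 * a - σ₁ := by linear_combination hsum
      constructor
      · apply Complex.ext
        · simp [hσ₂, Complex.sub_re, hre]; push_cast; ring
        · simp [hσ₂, Complex.sub_im]
      · apply Complex.ext
        · simp [hσ₂, Complex.sub_re, hre]; push_cast; ring
        · simp [hσ₂, Complex.sub_im]
  constructor
  · -- realness
    intro i j
    have hhalf : (starRingEnd ℂ) (1 / 2 : ℂ) = 1 / 2 := by
      simp [map_div₀, Complex.conj_ofNat]
    fin_cases j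
    · rw [← Complex.conj_eq_iff_im]
      show (starRingEnd ℂ) (V i 0) = V i 0
      rw [hV0 i]
      simp only [map_add, _root_.map_mul, hhalf]
      rcases hdich with ⟨hc1, hc2⟩ | ⟨hc1, hc2⟩ <;>
        [(have e1 := hconjx σ₁ h1 i; have e2 := hconjx σ₂ h2 i;
          rw [hc1] at e1; rw [hc2] at e2;
          rw [show (starRingEnd ℂ) (x₁ i) = x₁ i from e1,
            show (starRingEnd ℂ) (x₂ i) = x₂ i from e2]);
         (have e1 := hconjx σ₁ h1 i; have e2 := hconjx σ₂ h2 i;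
          rw [hc1] at e1; rw [hc2] at e2;
          rw [show (starRingEnd ℂ) (x₁ i) = x₂ i from e1,
            show (starRingEnd ℂ) (x₂ i) = x₁ i from e2])] <;> ring
    · rw [← Complex.conj_eq_iff_im]
      show (starRingEnd ℂ) (V i 1) = V i 1
      rw [hV1 i, hv₁pt i]
      simp only [_root_.map_mul, map_sub, map_inv₀]
      rcases hdich with ⟨hc1, hc2⟩ | ⟨hc1, hc2⟩
      · have e1 := hconjx σ₁ h1 i
        have e2 := hconjx σ₂ h2 i
        rw [hc1] at e1; rw [hc2] at e2
        rw [hc1, hc2, show (starRingEnd ℂ) (x₁ i) = x₁ i from e1,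
          show (starRingEnd ℂ) (x₂ i) = x₂ i from e2]
      · have e1 := hconjx σ₁ h1 i
        have e2 := hconjx σ₂ h2 i
        rw [hc1] at e1; rw [hc2] at e2
        rw [hc1, hc2, show (starRingEnd ℂ) (x₁ i) = x₂ i from e1,
          show (starRingEnd ℂ) (x₂ i) = x₁ i from e2,
          show σ₂ - σ₁ = -(σ₁ - σ₂) by ring,
          show x₂ i - x₁ i = -(x₁ i - x₂ i) by ring, inv_neg]
        ring
  · -- Sylvester equation
    have hmul : ∀ (M : Matrix (Fin n) (Fin n) ℂ) (j : Fin 2) (i : Fin n),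
        (M * V) i j = (M *ᵥ (fun k => V k j)) i := by
      intro M j i
      simp [Matrix.mul_apply, Matrix.mulVec, dotProduct]
    have hc0 : (fun k => V k 0) = (1/2 : ℂ) • x₁ + (1/2 : ℂ) • x₂ := by
      funext k
      rw [hV0 k]
      simp [← hx₁, ← hx₂]
    have hc1 : (fun k => V k 1) = v₁ := by
      funext k; exact hV1 k
    have hca : (a : ℂ) = (σ₁ + σ₂) / 2 := by linear_combination (-1/2 : ℂ) * hsum
    have hcb : (b : ℂ) = σ₁ * σ₂ := hprod.symm
    ext i j
    fin_cases j
    · -- column 0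
      have hAV0 : (A * V) i 0 = (A *ᵥ ((1/2 : ℂ) • x₁ + (1/2 : ℂ) • x₂)) i := by
        rw [hmul, hc0]
      have hEV0 : (E * V) i 0 = (E *ᵥ ((1/2 : ℂ) • x₁ + (1/2 : ℂ) • x₂)) i := by
        rw [hmul, hc0]
      have hEV1 : (E * V) i 1 = (E *ᵥ v₁) i := by rw [hmul, hc1]
      show (A * V - E * V * !![(a : ℂ), 1; (a : ℂ) ^ 2 - (b : ℂ), (a : ℂ)]
          - (Matrix.of fun i (_ : Fin 1) => bc i) * !![(1 : ℂ), 0]) i 0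
          = (0 : Matrix (Fin n) (Fin 2) ℂ) i 0
      have hS : (E * V * !![(a : ℂ), 1; (a : ℂ) ^ 2 - (b : ℂ), (a : ℂ)]) i 0
          = (E * V) i 0 * (a : ℂ) + (E * V) i 1 * ((a : ℂ) ^ 2 - (b : ℂ)) := by
        rw [Matrix.mul_apply, Fin.sum_univ_two]; simp
      have hR : ((Matrix.of fun i (_ : Fin 1) => bc i) * !![(1 : ℂ), 0]) i 0 = bc i := by
        rw [Matrix.mul_apply, Fin.sum_univ_one]; simp
      rw [Matrix.sub_apply, Matrix.sub_apply, hS, hR, hAV0, hEV0, hEV1, Matrix.zero_apply]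
      have p1 := congrFun f1 i
      have p2 := congrFun f2 i
      have p3 := congrFun f4' i
      simp only [Matrix.mulVec_add, Matrix.mulVec_smul, Pi.add_apply, Pi.smul_apply,
        smul_eq_mul] at p1 p2 p3 ⊢
      rw [p1, p2, p3, hca, hcb]
      ring
    · -- column 1
      have hEV0 : (E * V) i 0 = (E *ᵥ ((1/2 : ℂ) • x₁ + (1/2 : ℂ) • x₂)) i := by
        rw [hmul, hc0]
      have hEV1 : (E * V) i 1 = (E *ᵥ v₁) i := by rw [hmul, hc1]
      have hAV1 : (A * V) i 1 = (A *ᵥ v₁) i := by rw [hmul, hc1]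
      show (A * V - E * V * !![(a : ℂ), 1; (a : ℂ) ^ 2 - (b : ℂ), (a : ℂ)]
          - (Matrix.of fun i (_ : Fin 1) => bc i) * !![(1 : ℂ), 0]) i 1
          = (0 : Matrix (Fin n) (Fin 2) ℂ) i 1
      have hS : (E * V * !![(a : ℂ), 1; (a : ℂ) ^ 2 - (b : ℂ), (a : ℂ)]) i 1
          = (E * V) i 0 * 1 + (E * V) i 1 * (a : ℂ) := by
        rw [Matrix.mul_apply, Fin.sum_univ_two]; simp
      have hR : ((Matrix.of fun i (_ : Fin 1) => bc i) * !![(1 : ℂ), 0]) i 1 = 0 := by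
        rw [Matrix.mul_apply, Fin.sum_univ_one]; simp
      rw [Matrix.sub_apply, Matrix.sub_apply, hS, hR, hAV1, hEV0, hEV1, Matrix.zero_apply]
      have p3 := congrFun f4' i
      have p4 := congrFun f3 i
      simp only [Matrix.mulVec_add, Matrix.mulVec_smul, Pi.add_apply, Pi.smul_apply,
        smul_eq_mul] at p3 p4 ⊢
      rw [p4, p3, hca]
      ring
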